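/- arXiv:2510.14155 — 8 statements merged into one kernel-verified Lean document; each statement's English description precedes it below -/
import Mathlib

section
/- Let (G, g, h) be a quasi-twilled Lie algebra with bracket Ω = π + ρ + μ + η + θ as in the structure theorem (H = k case). Then Ω, viewed as a degree-1 element of the graded Lie algebra of cochains on g ⊞ h with the Nijenhuis–Richardson bracket, satisfies [Ω, Ω]_{NR} = 0 if and only if the following hold: [π,π]_{NR} + 2 η∘θ = 0; [ρ,θ]_{NR} + [π,θ]_{NR} = 0; [π,η]_{NR} + η∘ρ = 0; (1/2)[ρ,ρ]_{NR} + θ∘η + [μ,θ]_{NR} + [π,ρ]_{NR} = 0; 2[μ,η]_{NR} + [η,η]_{NR} = 0; [ρ,μ]_{NR} + ρ∘η = 0; [μ,μ]_{NR} = 0. -/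
section

variable {g h : Type*} [AddCommGroup g] [AddCommGroup h]

/-- Circle product of two (skew) 2-cochains on a space `V`:
`(f ∘ g)(x,y,z) = f(g(x,y),z) − f(g(x,z),y) + f(g(y,z),x)`
(the sum over the (2,1)-shuffles with signs). -/
def circ3 {V : Type*} [AddCommGroup V] (f G : V → V → V) : V → V → V → V :=
  fun x y z => f (G x y) z - f (G x z) y + f (G y z) x

/-- Nijenhuis–Richardson bracket of two 2-cochains:
`[f,g]_{NR} = f ∘ g − (−1)^{(2−1)(2−1)} g ∘ f = f ∘ g + g ∘ f`. -/
def nr2 {V : Type*} [AddCommGroup V] (f G : V → V → V) : V → V → V → V :=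
  fun x y z => circ3 f G x y z + circ3 G f x y z

/-- Lift of `π : g ⊗ g → g` to a 2-cochain on `g ⊞ h`. -/
def liftPi (π : g → g → g) : g × h → g × h → g × h :=
  fun A B => (π A.1 B.1, 0)

/-- Lift of `θ : g ⊗ g → h` to a 2-cochain on `g ⊞ h`. -/
def liftTheta (θ : g → g → h) : g × h → g × h → g × h :=
  fun A B => (0, θ A.1 B.1)

/-- Lift of `ρ : g ⊗ h → h` to a 2-cochain on `g ⊞ h`. -/
def liftRho (ρ : g → h → h) : g × h → g × h → g × h :=
  fun A B => (0, ρ A.1 B.2 - ρ B.1 A.2)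

/-- Lift of `η : g ⊗ h → g` to a 2-cochain on `g ⊞ h`. -/
def liftEta (η : g → h → g) : g × h → g × h → g × h :=
  fun A B => (η A.1 B.2 - η B.1 A.2, 0)

/-- Lift of `μ : h ⊗ h → h` to a 2-cochain on `g ⊞ h`. -/
def liftMu (μ : h → h → h) : g × h → g × h → g × h :=
  fun A B => (0, μ A.2 B.2)

end

set_option maxHeartbeats 4000000 in
/-- For a quasi-twilled Lie algebra `(G, g, h)` with
`Ω = π + ρ + μ + η + θ`, the Maurer–Cartan condition `[Ω,Ω]_{NR} = 0` holds
if and only if the seven bidegree components vanish: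
`[π,π] + 2 η∘θ = 0`, `[ρ,θ] + [π,θ] = 0`, `[π,η] + η∘ρ = 0`,
`½[ρ,ρ] + θ∘η + [μ,θ] + [π,ρ] = 0`, `2[μ,η] + [η,η] = 0`,
`[ρ,μ] + ρ∘η = 0`, `[μ,μ] = 0`. -/
theorem stmt5 {k g h : Type*} [Field k] [CharZero k]
    [AddCommGroup g] [Module k g] [AddCommGroup h] [Module k h]
    (π : g →ₗ[k] g →ₗ[k] g) (ρ : g →ₗ[k] h →ₗ[k] h) (μ : h →ₗ[k] h →ₗ[k] h)
    (η : g →ₗ[k] h →ₗ[k] g) (θ : g →ₗ[k] g →ₗ[k] h)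
    (hπ : ∀ x y, π x y = - π y x) (hθ : ∀ x y, θ x y = - θ y x)
    (hμ : ∀ u v, μ u v = - μ v u) :
    (let P := liftPi (g := g) (h := h) (fun x y => π x y)
     let R := liftRho (fun x v => ρ x v)
     let M := liftMu (g := g) (fun u v => μ u v)
     let E := liftEta (fun x v => η x v)
     let T := liftTheta (fun x y => θ x y)
     let Ω := fun A B => P A B + R A B + M A B + E A B + T A B
     (∀ A B C : g × h, nr2 Ω Ω A B C = 0) ↔
      ((∀ A B C : g × h, nr2 P P A B C + (2 : ℤ) • circ3 E T A B C = 0) ∧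
       (∀ A B C : g × h, nr2 R T A B C + nr2 P T A B C = 0) ∧
       (∀ A B C : g × h, nr2 P E A B C + circ3 E R A B C = 0) ∧
       (∀ A B C : g × h, ((1 : k) / 2) • nr2 R R A B C + circ3 T E A B C
          + nr2 M T A B C + nr2 P R A B C = 0) ∧
       (∀ A B C : g × h, (2 : ℤ) • nr2 M E A B C + nr2 E E A B C = 0) ∧
       (∀ A B C : g × h, nr2 R M A B C + circ3 R E A B C = 0) ∧
       (∀ A B C : g × h, nr2 M M A B C = 0))) := by
  dsimp only
  constructor
  · intro H
    refine ⟨?_, ?_, ?_, ?_, ?_, ?_, ?_⟩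
    · -- Eq1 : ggg → g
      intro ⟨a,u⟩ ⟨b,v⟩ ⟨c,w⟩
      have e1 := congrArg Prod.fst (H (a,0) (b,0) (c,0))
      simp [nr2, circ3, liftPi, liftRho, liftMu, liftEta, liftTheta] at e1 ⊢
      linear_combination (norm := module) e1
    · -- Eq2 : ggg → h
      intro ⟨a,u⟩ ⟨b,v⟩ ⟨c,w⟩
      have e1 := congrArg Prod.snd (H (a,0) (b,0) (c,0))
      simp [nr2, circ3, liftPi, liftRho, liftMu, liftEta, liftTheta] at e1 ⊢
      linear_combination (norm := module) ((1:k)/2) • e1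
    · -- Eq3 : ggh → g
      intro ⟨a,u⟩ ⟨b,v⟩ ⟨c,w⟩
      have e1 := congrArg Prod.fst (H (a,0) (b,0) ((0:g),w))
      have e2 := congrArg Prod.fst (H (a,0) ((0:g),v) (c,0))
      have e3 := congrArg Prod.fst (H ((0:g),u) (b,0) (c,0))
      simp [nr2, circ3, liftPi, liftRho, liftMu, liftEta, liftTheta] at e1 e2 e3 ⊢
      linear_combination (norm := module) ((1:k)/2) • e1 + ((1:k)/2) • e2 + ((1:k)/2) • e3
    · -- Eq4 : ggh → h
      intro ⟨a,u⟩ ⟨b,v⟩ ⟨c,w⟩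
      have e1 := congrArg Prod.snd (H (a,0) (b,0) ((0:g),w))
      have e2 := congrArg Prod.snd (H (a,0) ((0:g),v) (c,0))
      have e3 := congrArg Prod.snd (H ((0:g),u) (b,0) (c,0))
      simp [nr2, circ3, liftPi, liftRho, liftMu, liftEta, liftTheta] at e1 e2 e3 ⊢
      linear_combination (norm := module) ((1:k)/2) • e1 + ((1:k)/2) • e2 + ((1:k)/2) • e3
    · -- Eq5 : ghh → g
      intro ⟨a,u⟩ ⟨b,v⟩ ⟨c,w⟩
      have e1 := congrArg Prod.fst (H (a,0) ((0:g),v) ((0:g),w))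
      have e2 := congrArg Prod.fst (H ((0:g),u) (b,0) ((0:g),w))
      have e3 := congrArg Prod.fst (H ((0:g),u) ((0:g),v) (c,0))
      simp [nr2, circ3, liftPi, liftRho, liftMu, liftEta, liftTheta] at e1 e2 e3 ⊢
      linear_combination (norm := module) e1 + e2 + e3
    · -- Eq6 : ghh → h
      intro ⟨a,u⟩ ⟨b,v⟩ ⟨c,w⟩
      have e1 := congrArg Prod.snd (H (a,0) ((0:g),v) ((0:g),w))
      have e2 := congrArg Prod.snd (H ((0:g),u) (b,0) ((0:g),w))
      have e3 := congrArg Prod.snd (H ((0:g),u) ((0:g),v) (c,0))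
      simp [nr2, circ3, liftPi, liftRho, liftMu, liftEta, liftTheta] at e1 e2 e3 ⊢
      linear_combination (norm := module) ((1:k)/2) • e1 + ((1:k)/2) • e2 + ((1:k)/2) • e3
    · -- Eq7 : hhh → h
      intro ⟨a,u⟩ ⟨b,v⟩ ⟨c,w⟩
      have e1 := congrArg Prod.snd (H ((0:g),u) ((0:g),v) ((0:g),w))
      simp [nr2, circ3, liftPi, liftRho, liftMu, liftEta, liftTheta] at e1 ⊢
      linear_combination (norm := module) e1
  · rintro ⟨h1, h2, h3, h4, h5, h6, h7⟩ A B C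
    have f1 := congrArg Prod.fst (h1 A B C)
    have f3 := congrArg Prod.fst (h3 A B C)
    have f5 := congrArg Prod.fst (h5 A B C)
    have s2 := congrArg Prod.snd (h2 A B C)
    have s4 := congrArg Prod.snd (h4 A B C)
    have s6 := congrArg Prod.snd (h6 A B C)
    have s7 := congrArg Prod.snd (h7 A B C)
    refine Prod.ext ?_ ?_
    · simp [nr2, circ3, liftPi, liftRho, liftMu, liftEta, liftTheta] at f1 f3 f5 ⊢
      linear_combination (norm := module) f1 + (2:k) • f3 + f5
    · simp [nr2, circ3, liftPi, liftRho, liftMu, liftEta, liftTheta] at s2 s4 s6 s7 ⊢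
      linear_combination (norm := module) (2:k) • s2 + (2:k) • s4 + (2:k) • s6 + s7
end

section
/- Let (g, [·,·]) be a Lie algebra and p a scalar. Define on g ⊞ g the bracket [(x,u),(y,v)]_M = ([x,v] − [y,u], p[x,y] + [u,v]). Then (g ⊞ g, [·,·]_M) is a Lie algebra, and the triple (g ⊕_M g, g, g) is a quasi-twilled Lie algebra (the second copy of g is a subalgebra). -/
/-- The bracket `[(x,u),(y,v)]_M = ([x,v] − [y,u], p[x,y] + [u,v])` on `g ⊞ g`. -/
def mBracket {k g : Type*} [Field k] [LieRing g] [LieAlgebra k g] (p : k) :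
    g × g → g × g → g × g :=
  fun A B => (⁅A.1, B.2⁆ - ⁅B.1, A.2⁆, p • ⁅A.1, B.1⁆ + ⁅A.2, B.2⁆)

private lemma sw {g : Type*} [LieRing g] (a b : g) : ⁅a, b⁆ = -⁅b, a⁆ :=
  (lie_skew a b).symm

private lemma lcan {g : Type*} [LieRing g] (a b c : g) :
    ⁅a, ⁅b, c⁆⁆ = ⁅⁅a, b⁆, c⁆ - ⁅⁅a, c⁆, b⁆ := by
  rw [leibniz_lie, sw b ⁅a,c⁆, sw ⁅a,c⁆ b]; abel

/-- For a Lie algebra `g` and a scalar `p`, the bracket `[·,·]_M` makes `g ⊞ g`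
a Lie algebra (it is skew-symmetric and satisfies the Jacobi/Leibniz identity),
and the second copy of `g` is a Lie subalgebra, so `(g ⊕_M g, g, g)` is a
quasi-twilled Lie algebra. -/
theorem stmt7 {k g : Type*} [Field k] [CharZero k] [LieRing g] [LieAlgebra k g]
    (p : k) :
    (∀ A B : g × g, mBracket p A B = - mBracket p B A) ∧
    (∀ A B C : g × g,
      mBracket p A (mBracket p B C) =
        mBracket p (mBracket p A B) C + mBracket p B (mBracket p A C)) ∧
    (∀ u v : g, (mBracket p ((0 : g), u) ((0 : g), v)).1 = 0) := by
  refine ⟨fun A B => ?_, fun A B C => ?_, fun u v => ?_⟩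
  · simp only [mBracket, Prod.neg_mk, Prod.mk.injEq]
    refine ⟨by abel, ?_⟩
    rw [sw A.1 B.1, sw A.2 B.2, smul_neg]
    abel
  · obtain ⟨x, u⟩ := A; obtain ⟨y, v⟩ := B; obtain ⟨z, w⟩ := C
    simp only [mBracket, Prod.mk_add_mk, Prod.mk.injEq, lie_add, add_lie, lie_sub, sub_lie,
      lie_smul, smul_lie, smul_add, smul_sub]
    constructor
    · rw [lcan x y z, lcan x v w, lcan y u w, lcan z u v, sw z ⁅x,y⁆, sw y ⁅x,z⁆]
      simp only [smul_neg, smul_sub]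
      abel
    · rw [leibniz_lie x y w, sw z v, leibniz_lie u y z, leibniz_lie u v w, sw u y, sw u z]
      simp only [lie_neg, neg_lie, smul_neg, smul_add, smul_sub, sw z u]
      rw [leibniz_lie x v z, smul_add]
      abel
  · simp [mBracket]
end

section
/- Let (g, [·,·]) be a Lie algebra, p a scalar, and consider the quasi-twilled Lie algebra (g ⊕_M g, g, g) with bracket [(x,u),(y,v)]_M = ([x,v] − [y,u], p[x,y] + [u,v]). Then a linear map D : g → g is a deformation map of type I of this quasi-twilled Lie algebra if and only if D satisfies the modified Yang–Baxter equation: [D(x), D(y)] = D([D(x), y] + [x, D(y)]) − p[x, y] for all x, y ∈ g. -/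
/-- Deformation map of type I of a quasi-twilled Lie algebra with components
`π, ρ, μ, η, θ`. -/
def IsDefMapI {g h : Type*} [AddCommGroup g] [AddCommGroup h]
    (π : g → g → g) (ρ : g → h → h) (μ : h → h → h)
    (η : g → h → g) (θ : g → g → h) (D : g → h) : Prop :=
  ∀ x y : g, D (π x y + η x (D y) - η y (D x)) =
    μ (D x) (D y) + ρ x (D y) - ρ y (D x) + θ x y

/-- For the quasi-twilled Lie algebra `(g ⊕_M g, g, g)` (components
`π = ρ = 0`, `η = μ = [·,·]`, `θ = p[·,·]`), a linear map `D : g → g` is a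
type-I deformation map if and only if `D` satisfies the modified Yang–Baxter
equation `[D x, D y] = D([D x, y] + [x, D y]) − p[x, y]`. -/
theorem stmt8 {k g : Type*} [Field k] [CharZero k] [LieRing g] [LieAlgebra k g]
    (p : k) (D : g →ₗ[k] g) :
    IsDefMapI (fun _ _ => (0 : g)) (fun _ _ => (0 : g)) (fun u v => ⁅u, v⁆)
        (fun x v => ⁅x, v⁆) (fun x y => p • ⁅x, y⁆) (fun x => D x) ↔
      ∀ x y : g, ⁅D x, D y⁆ = D (⁅D x, y⁆ + ⁅x, D y⁆) - p • ⁅x, y⁆ := by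
  unfold IsDefMapI
  constructor <;> intro h x y <;> have hxy := h x y <;>
    simp only [zero_add, add_zero, sub_zero] at hxy ⊢
  · rw [show (⁅x, D y⁆ - ⁅y, D x⁆ : g) = ⁅D x, y⁆ + ⁅x, D y⁆ by
      rw [← lie_skew y (D x)]; abel] at hxy
    rw [hxy]; abel
  · rw [show (⁅x, D y⁆ - ⁅y, D x⁆ : g) = ⁅D x, y⁆ + ⁅x, D y⁆ by
      rw [← lie_skew y (D x)]; abel]
    rw [hxy]; abel
end

section
/- Let (G, g, h) be a quasi-twilled Lie algebra with components π, ρ, μ, η, θ, and let D : g → h be a linear map. Extend D to a degree-0 nilpotent operator on G = g ⊞ h (so D² = 0 on G) and define the twisted bracket Ω^D = e^{−D} ∘ Ω ∘ (e^D ⊗ e^D). Then Ω^D decomposes as π^D + ρ^D + μ^D + η^D + θ^D with: μ^D = μ; η^D = η; π^D(x,y) = π(x,y) + η(x,D(y)) − η(y,D(x)); ρ^D(x,v) = ρ(x,v) + μ(D(x),v) − D(η(x,v)); and θ^D(x,y) = θ(x,y) + ρ(x,D(y)) − ρ(y,D(x)) − D(π(x,y)) + μ(D(x),D(y)) − D(η(x,D(y)))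 + D(η(y,D(x))). Moreover, ((G, Ω^D), g, h) is again a quasi-twilled Lie algebra, and D is a deformation map of type I if and only if θ^D = 0. -/
/-- The bracket of a quasi-twilled Lie algebra on `g ⊞ h` built from the
components `π, ρ, μ, η, θ`. -/
def qtBracket {g h : Type*} [AddCommGroup g] [AddCommGroup h]
    (π : g → g → g) (ρ : g → h → h) (μ : h → h → h)
    (η : g → h → g) (θ : g → g → h) : g × h → g × h → g × h :=
  fun A B =>
    (π A.1 B.1 + η A.1 B.2 - η B.1 A.2,
     μ A.2 B.2 + ρ A.1 B.2 - ρ B.1 A.2 + θ A.1 B.1)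

/-- `e^D : G → G`, `(x,u) ↦ (x, u + D x)` (here `D² = 0` since `D` is extended
by zero on `h`). -/
def expD {g h : Type*} [AddCommGroup g] [AddCommGroup h] (D : g → h) :
    g × h → g × h := fun A => (A.1, A.2 + D A.1)

/-- `e^{-D} : G → G`, `(x,u) ↦ (x, u − D x)`. -/
def expNegD {g h : Type*} [AddCommGroup g] [AddCommGroup h] (D : g → h) :
    g × h → g × h := fun A => (A.1, A.2 - D A.1)

/-- The twisting `Ω^D = e^{−D} ∘ Ω ∘ (e^D ⊗ e^D)`. -/
def twistedBracket {g h : Type*} [AddCommGroup g] [AddCommGroup h]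
    (Ω : g × h → g × h → g × h) (D : g → h) : g × h → g × h → g × h :=
  fun A B => expNegD D (Ω (expD D A) (expD D B))

/-- Twisting of a quasi-twilled Lie algebra by a linear map `D : g → h`:
the twisted bracket `Ω^D = e^{−D} ∘ Ω ∘ (e^D ⊗ e^D)` decomposes with
`μ^D = μ`, `η^D = η`, `π^D(x,y) = π(x,y) + η(x,Dy) − η(y,Dx)`,
`ρ^D(x,v) = ρ(x,v) + μ(Dx,v) − D(η(x,v))` and the stated `θ^D`; the twisted
structure is again a quasi-twilled Lie algebra, and `D` is a type-I
deformation map iff `θ^D = 0`. -/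
theorem stmt12 {k g h : Type*} [Field k] [CharZero k]
    [AddCommGroup g] [Module k g] [AddCommGroup h] [Module k h]
    (π : g →ₗ[k] g →ₗ[k] g) (ρ : g →ₗ[k] h →ₗ[k] h) (μ : h →ₗ[k] h →ₗ[k] h)
    (η : g →ₗ[k] h →ₗ[k] g) (θ : g →ₗ[k] g →ₗ[k] h)
    (hπ : ∀ x y, π x y = - π y x) (hθ : ∀ x y, θ x y = - θ y x)
    (hμ : ∀ u v, μ u v = - μ v u)
    (hJac : ∀ A B C : g × h,
      qtBracket (fun x y => π x y) (fun x v => ρ x v) (fun u v => μ u v)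
          (fun x v => η x v) (fun x y => θ x y) A
        (qtBracket (fun x y => π x y) (fun x v => ρ x v) (fun u v => μ u v)
          (fun x v => η x v) (fun x y => θ x y) B C) =
      qtBracket (fun x y => π x y) (fun x v => ρ x v) (fun u v => μ u v)
          (fun x v => η x v) (fun x y => θ x y)
        (qtBracket (fun x y => π x y) (fun x v => ρ x v) (fun u v => μ u v)
          (fun x v => η x v) (fun x y => θ x y) A B) C +
      qtBracket (fun x y => π x y) (fun x v => ρ x v) (fun u v => μ u v)
          (fun x v => η x v) (fun x y => θ x y) B
        (qtBracket (fun x y => π x y) (fun x v => ρ x v) (fun u v => μ u v)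
          (fun x v => η x v) (fun x y => θ x y) A C))
    (D : g →ₗ[k] h) :
    -- notation for the original and the twisted brackets
    (let Ω := qtBracket (fun x y => π x y) (fun x v => ρ x v)
        (fun u v => μ u v) (fun x v => η x v) (fun x y => θ x y);
     let ΩD := twistedBracket Ω (fun x => D x);
     let πD : g → g → g := fun x y => π x y + η x (D y) - η y (D x);
     let ρD : g → h → h := fun x v => ρ x v + μ (D x) v - D (η x v);
     let θD : g → g → h := fun x y =>
       θ x y + ρ x (D y) - ρ y (D x) - D (π x y) + μ (D x) (D y)
         - D (η x (D y)) + D (η y (D x));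
     -- (a) the decomposition of the twisted bracket
     (∀ A B : g × h, ΩD A B = qtBracket πD ρD (fun u v => μ u v)
        (fun x v => η x v) θD A B) ∧
     -- (b) the twisted structure is again a quasi-twilled Lie algebra
     (∀ A B : g × h, ΩD A B = - ΩD B A) ∧
     (∀ A B C : g × h, ΩD A (ΩD B C) = ΩD (ΩD A B) C + ΩD B (ΩD A C)) ∧
     (∀ u v : h, (ΩD ((0 : g), u) ((0 : g), v)).1 = 0) ∧
     -- (c) D is a type-I deformation map iff θ^D = 0
     (IsDefMapI (fun x y => π x y) (fun x v => ρ x v) (fun u v => μ u v)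
        (fun x v => η x v) (fun x y => θ x y) (fun x => D x) ↔
       ∀ x y : g, θD x y = 0)) := by


  intro Ω ΩD πD ρD θD
  have hJac' : ∀ A B C : g × h, Ω A (Ω B C) = Ω (Ω A B) C + Ω B (Ω A C) := hJac
  have hED : ∀ A : g × h, expD (fun x => D x) (expNegD (fun x => D x) A) = A := by
    intro A; simp [expD, expNegD]
  have hNegAdd : ∀ A B : g × h, expNegD (fun x => D x) (A + B) =
      expNegD (fun x => D x) A + expNegD (fun x => D x) B := by
    intro A B
    simp [expNegD, Prod.ext_iff, map_add]
    abel
  have hNegNeg : ∀ A : g × h, expNegD (fun x => D x) (-A) =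
      - expNegD (fun x => D x) A := by
    intro A; simp [expNegD, Prod.ext_iff]; abel
  have hΩanti : ∀ A B : g × h, Ω A B = - Ω B A := by
    intro A B
    simp only [Ω, qtBracket, Prod.ext_iff, Prod.fst_neg, Prod.snd_neg]
    constructor
    · rw [hπ A.1 B.1]; abel
    · rw [hθ A.1 B.1, hμ A.2 B.2]; abel
  refine ⟨?_, ?_, ?_, ?_, ?_⟩
  · intro A B
    obtain ⟨x, u⟩ := A; obtain ⟨y, v⟩ := B
    simp only [ΩD, Ω, πD, ρD, θD, twistedBracket, expD, expNegD, qtBracket,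
      Prod.ext_iff, map_add, map_sub, LinearMap.add_apply, LinearMap.sub_apply]
    constructor
    · abel
    · rw [hμ u (D y)]; abel
  · intro A B
    simp only [ΩD, twistedBracket]
    rw [hΩanti, hNegNeg]
  · intro A B C
    simp only [ΩD, twistedBracket]
    rw [hED, hED, hED, hJac', hNegAdd]
  · intro u v
    simp [ΩD, Ω, twistedBracket, expD, expNegD, qtBracket]
  · constructor
    · intro hd x y
      have h1 := hd x y
      simp only [map_add, map_sub] at h1
      show θ x y + ρ x (D y) - ρ y (D x) - D (π x y) + μ (D x) (D y)
        - D (η x (D y)) + D (η y (D x)) = 0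
      calc θ x y + ρ x (D y) - ρ y (D x) - D (π x y) + μ (D x) (D y)
            - D (η x (D y)) + D (η y (D x))
          = (μ (D x) (D y) + ρ x (D y) - ρ y (D x) + θ x y)
            - (D (π x y) + D (η x (D y)) - D (η y (D x))) := by abel
        _ = 0 := by rw [← h1]; abel
    · intro hd x y
      have h1 : θ x y + ρ x (D y) - ρ y (D x) - D (π x y) + μ (D x) (D y)
        - D (η x (D y)) + D (η y (D x)) = 0 := hd x y
      show D (π x y + η x (D y) - η y (D x)) =
        μ (D x) (D y) + ρ x (D y) - ρ y (D x) + θ x y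
      simp only [map_add, map_sub]
      have h2 : (μ (D x) (D y) + ρ x (D y) - ρ y (D x) + θ x y)
          - (D (π x y) + D (η x (D y)) - D (η y (D x))) = 0 := by
        rw [← h1]; abel
      have h3 := sub_eq_zero.mp h2
      rw [← h3]
end

section
/- Let (G, g, h) be a quasi-twilled Lie algebra with components π, ρ, μ, η, θ, and let D : g → h be a deformation map of type I. Define π^D(x,y) = π(x,y) + η(x,D(y)) − η(y,D(x)) on g and ρ^D(x,v) = ρ(x,v) + μ(D(x),v) − D(η(x,v)) from g ⊗ h to h. Then (g, π^D) is a Lie algebra and ρ^D defines a representation of (g, π^D) on h. -/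
/-- Let `(G, g, h)` be a quasi-twilled Lie algebra with components
`π, ρ, μ, η, θ` and `D : g → h` a type-I deformation map.  With
`π^D(x,y) = π(x,y) + η(x,Dy) − η(y,Dx)` and
`ρ^D(x,v) = ρ(x,v) + μ(Dx,v) − D(η(x,v))`, the pair `(g, π^D)` is a Lie
algebra and `ρ^D` is a representation of `(g, π^D)` on `h`. -/
theorem stmt15 {k g h : Type*} [Field k] [CharZero k]
    [AddCommGroup g] [Module k g] [AddCommGroup h] [Module k h]
    (π : g →ₗ[k] g →ₗ[k] g) (ρ : g →ₗ[k] h →ₗ[k] h) (μ : h →ₗ[k] h →ₗ[k] h)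
    (η : g →ₗ[k] h →ₗ[k] g) (θ : g →ₗ[k] g →ₗ[k] h)
    (hπ : ∀ x y, π x y = - π y x) (hθ : ∀ x y, θ x y = - θ y x)
    (hμ : ∀ u v, μ u v = - μ v u)
    (hJac : ∀ A B C : g × h,
      qtBracket (fun x y => π x y) (fun x v => ρ x v) (fun u v => μ u v)
          (fun x v => η x v) (fun x y => θ x y) A
        (qtBracket (fun x y => π x y) (fun x v => ρ x v) (fun u v => μ u v)
          (fun x v => η x v) (fun x y => θ x y) B C) =
      qtBracket (fun x y => π x y) (fun x v => ρ x v) (fun u v => μ u v)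
          (fun x v => η x v) (fun x y => θ x y)
        (qtBracket (fun x y => π x y) (fun x v => ρ x v) (fun u v => μ u v)
          (fun x v => η x v) (fun x y => θ x y) A B) C +
      qtBracket (fun x y => π x y) (fun x v => ρ x v) (fun u v => μ u v)
          (fun x v => η x v) (fun x y => θ x y) B
        (qtBracket (fun x y => π x y) (fun x v => ρ x v) (fun u v => μ u v)
          (fun x v => η x v) (fun x y => θ x y) A C))
    (D : g →ₗ[k] h)
    (hD : IsDefMapI (fun x y => π x y) (fun x v => ρ x v) (fun u v => μ u v)
        (fun x v => η x v) (fun x y => θ x y) (fun x => D x)) :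
    -- the twisted structure maps
    (∀ x y : g,
      (π x y + η x (D y) - η y (D x)) = -(π y x + η y (D x) - η x (D y))) ∧
    (∀ x y z : g,
      (fun a b => π a b + η a (D b) - η b (D a)) x
          ((fun a b => π a b + η a (D b) - η b (D a)) y z) =
        (fun a b => π a b + η a (D b) - η b (D a))
            ((fun a b => π a b + η a (D b) - η b (D a)) x y) z +
          (fun a b => π a b + η a (D b) - η b (D a)) y
            ((fun a b => π a b + η a (D b) - η b (D a)) x z)) ∧
    (∀ (x y : g) (v : h),
      (fun a w => ρ a w + μ (D a) w - D (η a w))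
          ((fun a b => π a b + η a (D b) - η b (D a)) x y) v =
        (fun a w => ρ a w + μ (D a) w - D (η a w)) x
            ((fun a w => ρ a w + μ (D a) w - D (η a w)) y v) -
          (fun a w => ρ a w + μ (D a) w - D (η a w)) y
            ((fun a w => ρ a w + μ (D a) w - D (η a w)) x v)) := by
  have key : ∀ x y : g,
      qtBracket (fun x y => π x y) (fun x v => ρ x v) (fun u v => μ u v)
        (fun x v => η x v) (fun x y => θ x y) (x, D x) (y, D y) =
      (π x y + η x (D y) - η y (D x), D (π x y + η x (D y) - η y (D x))) := by
    intro a b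
    have := hD a b
    simp only [qtBracket, Prod.mk.injEq]
    exact ⟨trivial, this.symm⟩
  refine ⟨?_, ?_, ?_⟩
  · intro x y
    rw [hπ x y]; abel
  · intro x y z
    have J := hJac (x, D x) (y, D y) (z, D z)
    rw [key x y, key x z, key y z, key, key, key] at J
    have := congrArg Prod.fst J
    simpa using this
  · intro x y v
    have J := hJac (x, D x) (y, D y) (0, v)
    have Jf := congrArg Prod.fst J
    have Js := congrArg Prod.snd J
    simp only [qtBracket, map_zero, LinearMap.zero_apply, map_add, map_sub,
      LinearMap.add_apply, LinearMap.sub_apply,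
      zero_add, add_zero, sub_zero, zero_sub, Prod.fst_add, Prod.snd_add] at Jf Js
    have hDf := congrArg D Jf
    have h1 := congrArg (fun w => μ w v) (hD x y)
    have h2 := hD x (η y v)
    have h3 := hD y (η x v)
    simp only [map_add, map_sub, LinearMap.add_apply, LinearMap.sub_apply] at hDf h1 h2 h3 ⊢
    linear_combination (norm := module) h1 + hDf + h3 - Js - h2
end

section
/- Let (G, g, h) be a quasi-twilled Lie algebra with components π, ρ, μ, η, θ, and let D : g → h be an invertible linear map. Then D is a deformation map of type I if and only if T = D^{−1} : h → g is a deformation map of type II, i.e., π(T(u), T(v)) + η(T(u), v) − η(T(v), u) = T(ρ(T(u), v) − ρ(T(v), u) + μ(u, v) + θ(T(u), T(v))) for all u, v ∈ h. -/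
/-- Deformation map of type II. -/
def IsDefMapII {g h : Type*} [AddCommGroup g] [AddCommGroup h]
    (π : g → g → g) (ρ : g → h → h) (μ : h → h → h)
    (η : g → h → g) (θ : g → g → h) (T : h → g) : Prop :=
  ∀ u v : h, π (T u) (T v) + η (T u) v - η (T v) u =
    T (ρ (T u) v - ρ (T v) u + μ u v + θ (T u) (T v))

/-- For a quasi-twilled Lie algebra `(G, g, h)` and an invertible linear map
`D : g → h`, `D` is a deformation map of type I if and only if
`T = D⁻¹ : h → g` is a deformation map of type II. -/
theorem stmt16 {k g h : Type*} [Field k] [CharZero k]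
    [AddCommGroup g] [Module k g] [AddCommGroup h] [Module k h]
    (π : g →ₗ[k] g →ₗ[k] g) (ρ : g →ₗ[k] h →ₗ[k] h) (μ : h →ₗ[k] h →ₗ[k] h)
    (η : g →ₗ[k] h →ₗ[k] g) (θ : g →ₗ[k] g →ₗ[k] h)
    (hπ : ∀ x y, π x y = - π y x) (hθ : ∀ x y, θ x y = - θ y x)
    (hμ : ∀ u v, μ u v = - μ v u)
    (hJac : ∀ A B C : g × h,
      qtBracket (fun x y => π x y) (fun x v => ρ x v) (fun u v => μ u v)
          (fun x v => η x v) (fun x y => θ x y) A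
        (qtBracket (fun x y => π x y) (fun x v => ρ x v) (fun u v => μ u v)
          (fun x v => η x v) (fun x y => θ x y) B C) =
      qtBracket (fun x y => π x y) (fun x v => ρ x v) (fun u v => μ u v)
          (fun x v => η x v) (fun x y => θ x y)
        (qtBracket (fun x y => π x y) (fun x v => ρ x v) (fun u v => μ u v)
          (fun x v => η x v) (fun x y => θ x y) A B) C +
      qtBracket (fun x y => π x y) (fun x v => ρ x v) (fun u v => μ u v)
          (fun x v => η x v) (fun x y => θ x y) B
        (qtBracket (fun x y => π x y) (fun x v => ρ x v) (fun u v => μ u v)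
          (fun x v => η x v) (fun x y => θ x y) A C))
    (D : g ≃ₗ[k] h) :
    IsDefMapI (fun x y => π x y) (fun x v => ρ x v) (fun u v => μ u v)
        (fun x v => η x v) (fun x y => θ x y) (fun x => D x) ↔
      IsDefMapII (fun x y => π x y) (fun x v => ρ x v) (fun u v => μ u v)
        (fun x v => η x v) (fun x y => θ x y) (fun u => D.symm u) := by
  constructor
  · intro hD u v
    have h1 := hD (D.symm u) (D.symm v)
    simp only [LinearEquiv.apply_symm_apply] at h1
    have h2 := congrArg D.symm h1
    simp only [LinearEquiv.symm_apply_apply] at h2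
    rw [h2]
    congr 1
    abel
  · intro hT x y
    have h1 := hT (D x) (D y)
    simp only [LinearEquiv.symm_apply_apply] at h1
    have h2 := congrArg D h1
    simp only [LinearEquiv.apply_symm_apply] at h2
    rw [h1]
    simp only [LinearEquiv.apply_symm_apply]
    abel
end

section
/- Let g be a Lie algebra and consider the quasi-twilled Lie algebra (g ⋉_{ad}^ω g, g, g) with ω(x,y) = [x,y]_g, i.e., bracket [(x,u),(y,v)] = ([x,y], [x,v] − [y,u] + [x,y]). Then a linear map T : g → g is a deformation map of type II if and only if T is a Reynolds operator: [T(u), T(v)] = T([T(u), v] + [u, T(v)] + [T(u), T(v)]) for all u, v ∈ g. -/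
/-- For a Lie algebra `g`, consider the quasi-twilled Lie algebra
`(g ⋉_{ad}^ω g, g, g)` with `ω(x,y) = [x,y]` (components `π = [·,·]`,
`ρ(x,v) = [x,v]`, `μ = 0`, `η = 0`, `θ = [·,·]`).  A linear map `T : g → g`
is a type-II deformation map iff `T` is a Reynolds operator:
`[T u, T v] = T([T u, v] + [u, T v] + [T u, T v])`. -/
theorem stmt18 {k g : Type*} [Field k] [CharZero k] [LieRing g] [LieAlgebra k g]
    (T : g →ₗ[k] g) :
    IsDefMapII (fun x y => ⁅x, y⁆) (fun x v => ⁅x, v⁆) (fun _ _ => (0 : g))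
        (fun _ _ => (0 : g)) (fun x y => ⁅x, y⁆) (fun u => T u) ↔
      ∀ u v : g, ⁅T u, T v⁆ = T (⁅T u, v⁆ + ⁅u, T v⁆ + ⁅T u, T v⁆) := by
  have e : ∀ u v : g, (⁅T u, v⁆ - ⁅T v, u⁆ + ⁅T u, T v⁆ : g)
      = ⁅T u, v⁆ + ⁅u, T v⁆ + ⁅T u, T v⁆ := by
    intro u v; rw [← lie_skew (T v) u]; abel
  constructor
  · intro H u v
    have := H u v
    simp only [add_zero, sub_zero, e] at this
    exact this
  · intro H u v
    simp only [add_zero, sub_zero, e]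
    exact H u v
end

section
/- Let (G, g, h) be a quasi-twilled Lie algebra with Ω = π + ρ + μ + η + θ, and let T : h → g be a deformation map of type II. Define μ^T(u,v) = μ(u,v) + ρ(T(u),v) − ρ(T(v),u) + θ(T(u),T(v)) on h, and ζ(v, x) = −η(x, v) − π(x, T(v)) + T(ρ(x, v)) − T(θ(T(v), x)) from h ⊗ g to g. Then (h, μ^T) is a Lie algebra and ζ defines a representation of (h, μ^T) on g. -/
/-- Let `(G, g, h)` be a quasi-twilled Lie algebra with components
`π, ρ, μ, η, θ` and `T : h → g` a type-II deformation map.  With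
`μ^T(u,v) = μ(u,v) + ρ(Tu,v) − ρ(Tv,u) + θ(Tu,Tv)` and
`ζ(v,x) = −η(x,v) − π(x,Tv) + T(ρ(x,v)) − T(θ(Tv,x))`, the pair `(h, μ^T)`
is a Lie algebra and `ζ` is a representation of `(h, μ^T)` on `g`. -/
theorem stmt19 {k g h : Type*} [Field k] [CharZero k]
    [AddCommGroup g] [Module k g] [AddCommGroup h] [Module k h]
    (π : g →ₗ[k] g →ₗ[k] g) (ρ : g →ₗ[k] h →ₗ[k] h) (μ : h →ₗ[k] h →ₗ[k] h)
    (η : g →ₗ[k] h →ₗ[k] g) (θ : g →ₗ[k] g →ₗ[k] h)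
    (hπ : ∀ x y, π x y = - π y x) (hθ : ∀ x y, θ x y = - θ y x)
    (hμ : ∀ u v, μ u v = - μ v u)
    (hJac : ∀ A B C : g × h,
      qtBracket (fun x y => π x y) (fun x v => ρ x v) (fun u v => μ u v)
          (fun x v => η x v) (fun x y => θ x y) A
        (qtBracket (fun x y => π x y) (fun x v => ρ x v) (fun u v => μ u v)
          (fun x v => η x v) (fun x y => θ x y) B C) =
      qtBracket (fun x y => π x y) (fun x v => ρ x v) (fun u v => μ u v)
          (fun x v => η x v) (fun x y => θ x y)
        (qtBracket (fun x y => π x y) (fun x v => ρ x v) (fun u v => μ u v)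
          (fun x v => η x v) (fun x y => θ x y) A B) C +
      qtBracket (fun x y => π x y) (fun x v => ρ x v) (fun u v => μ u v)
          (fun x v => η x v) (fun x y => θ x y) B
        (qtBracket (fun x y => π x y) (fun x v => ρ x v) (fun u v => μ u v)
          (fun x v => η x v) (fun x y => θ x y) A C))
    (T : h →ₗ[k] g)
    (hT : IsDefMapII (fun x y => π x y) (fun x v => ρ x v) (fun u v => μ u v)
        (fun x v => η x v) (fun x y => θ x y) (fun u => T u)) :
    (∀ u v : h,
      (fun a b => μ a b + ρ (T a) b - ρ (T b) a + θ (T a) (T b)) u v =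
        -((fun a b => μ a b + ρ (T a) b - ρ (T b) a + θ (T a) (T b)) v u)) ∧
    (∀ u v w : h,
      (fun a b => μ a b + ρ (T a) b - ρ (T b) a + θ (T a) (T b)) u
          ((fun a b => μ a b + ρ (T a) b - ρ (T b) a + θ (T a) (T b)) v w) =
        (fun a b => μ a b + ρ (T a) b - ρ (T b) a + θ (T a) (T b))
            ((fun a b => μ a b + ρ (T a) b - ρ (T b) a + θ (T a) (T b)) u v) w +
          (fun a b => μ a b + ρ (T a) b - ρ (T b) a + θ (T a) (T b)) v
            ((fun a b => μ a b + ρ (T a) b - ρ (T b) a + θ (T a) (T b)) u w)) ∧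
    (∀ (u v : h) (x : g),
      (fun b a => -η a b - π a (T b) + T (ρ a b) - T (θ (T b) a))
          ((fun a b => μ a b + ρ (T a) b - ρ (T b) a + θ (T a) (T b)) u v) x =
        (fun b a => -η a b - π a (T b) + T (ρ a b) - T (θ (T b) a)) u
            ((fun b a => -η a b - π a (T b) + T (ρ a b) - T (θ (T b) a)) v x) -
          (fun b a => -η a b - π a (T b) + T (ρ a b) - T (θ (T b) a)) v
            ((fun b a => -η a b - π a (T b) + T (ρ a b) - T (θ (T b) a)) u x)) := by

  set qb : g × h → g × h → g × h := qtBracket (fun x y => π x y) (fun x v => ρ x v)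
    (fun u v => μ u v) (fun x v => η x v) (fun x y => θ x y) with hqb
  have qbdef : ∀ A B : g × h, qb A B =
      (π A.1 B.1 + η A.1 B.2 - η B.1 A.2,
       μ A.2 B.2 + ρ A.1 B.2 - ρ B.1 A.2 + θ A.1 B.1) := by
    intro A B; rw [hqb]; rfl
  have qadd : ∀ A B C : g × h, qb A (B + C) = qb A B + qb A C := by
    intro A B C
    simp only [qbdef, Prod.fst_add, Prod.snd_add, Prod.mk_add_mk, map_add,
      LinearMap.add_apply]
    refine Prod.ext ?_ ?_ <;> simp only [] <;> abel
  have hE : ∀ u v : h, qb (T u, u) (T v, v) =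
      (T (μ u v + ρ (T u) v - ρ (T v) u + θ (T u) (T v)),
        μ u v + ρ (T u) v - ρ (T v) u + θ (T u) (T v)) := by
    intro u v
    have h1 := hT u v
    simp only [] at h1
    rw [qbdef]
    refine Prod.ext ?_ ?_
    · show π (T u) (T v) + η (T u) v - η (T v) u = _
      rw [h1]; congr 1; abel
    · rfl
  have hD : ∀ (v : h) (x : g), qb (T v, v) (x, (0:h)) =
      ((-η x v - π x (T v) + T (ρ x v) - T (θ (T v) x), (0:h)) +
        (T (θ (T v) x - ρ x v), θ (T v) x - ρ x v)) := by
    intro v x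
    rw [qbdef]
    refine Prod.ext ?_ ?_
    · show π (T v) x + η (T v) 0 - η x v = _
      rw [hπ (T v) x]
      simp only [map_zero, map_sub, Prod.fst_add]
      abel
    · show μ v 0 + ρ (T v) 0 - ρ x v + θ (T v) x = _
      simp only [map_zero, Prod.snd_add]
      abel
  refine ⟨?_, ?_, ?_⟩
  · intro u v
    simp only []
    rw [hμ u v, hθ (T u) (T v)]
    abel
  · intro u v w
    simp only []
    have J := hJac (T u, u) (T v, v) (T w, w)
    simp only [hE] at J
    have J2 := congrArg Prod.snd J
    simpa using J2
  · intro u v x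
    simp only []
    have J := hJac (T u, u) (T v, v) (x, (0:h))
    simp only [hD, qadd, hE] at J
    have h12 := congrArg (fun A : g × h => A.1 - T A.2) J
    simp only [Prod.fst_add, Prod.snd_add, map_add, map_sub, map_neg, map_zero,
      LinearMap.add_apply, LinearMap.sub_apply, LinearMap.neg_apply,
      LinearMap.zero_apply, add_zero, zero_add, sub_zero, neg_zero] at h12
    simp only [map_add, map_sub, map_neg, LinearMap.add_apply, LinearMap.sub_apply,
      LinearMap.neg_apply]
    rw [← sub_eq_zero] at h12
    rw [← sub_eq_zero, ← neg_eq_zero, ← h12]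
    abel
end
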